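/- arXiv:1010.2599 — 2 statements merged into one kernel-verified Lean document; each statement's English description precedes it below -/
import Mathlib

section
/- In a strict 2-category in which every 1-cell is invertible (for composition along objects), a 2-cell is invertible for horizontal composition (composition along objects) if and only if it is invertible for vertical composition (composition along 1-cells). -/
/-- A strict 2-category presented globularly: sets of objects, 1-cells and
2-cells with source/target maps, identities, composition of 1-cells along
objects (`c0`), vertical composition of 2-cells (`c1`) and horizontal
composition of 2-cells (`h0`), satisfying associativity, unit laws and the
exchange law. Compatibility proofs are passed as arguments. -/
structure TwoCat where
  C0 : Type
  C1 : Type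
  C2 : Type
  s0 : C1 → C0
  t0 : C1 → C0
  s1 : C2 → C1
  t1 : C2 → C1
  glob_s : ∀ a, s0 (s1 a) = s0 (t1 a)
  glob_t : ∀ a, t0 (s1 a) = t0 (t1 a)
  i1 : C0 → C1
  i2 : C1 → C2
  i1s : ∀ x, s0 (i1 x) = x
  i1t : ∀ x, t0 (i1 x) = x
  i2s : ∀ u, s1 (i2 u) = u
  i2t : ∀ u, t1 (i2 u) = u
  c0 : ∀ u v : C1, t0 u = s0 v → C1
  c0s : ∀ u v h, s0 (c0 u v h) = s0 u
  c0t : ∀ u v h, t0 (c0 u v h) = t0 v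
  c1 : ∀ a b : C2, t1 a = s1 b → C2
  c1s : ∀ a b h, s1 (c1 a b h) = s1 a
  c1t : ∀ a b h, t1 (c1 a b h) = t1 b
  h0 : ∀ a b : C2, t0 (s1 a) = s0 (s1 b) → C2
  h0s : ∀ a b h h', s1 (h0 a b h) = c0 (s1 a) (s1 b) h'
  h0t : ∀ a b h h', t1 (h0 a b h) = c0 (t1 a) (t1 b) h'
  c0_assoc : ∀ u v w h1 h2 h3 h4, c0 (c0 u v h1) w h2 = c0 u (c0 v w h3) h4
  c0_id_left : ∀ u h, c0 (i1 (s0 u)) u h = u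
  c0_id_right : ∀ u h, c0 u (i1 (t0 u)) h = u
  c1_assoc : ∀ a b c h1 h2 h3 h4, c1 (c1 a b h1) c h2 = c1 a (c1 b c h3) h4
  c1_id_left : ∀ a h, c1 (i2 (s1 a)) a h = a
  c1_id_right : ∀ a h, c1 a (i2 (t1 a)) h = a
  h0_assoc : ∀ a b c h1 h2 h3 h4, h0 (h0 a b h1) c h2 = h0 a (h0 b c h3) h4
  h0_i2 : ∀ u v h h', h0 (i2 u) (i2 v) h = i2 (c0 u v h')
  h0_id_left : ∀ a h, h0 (i2 (i1 (s0 (s1 a)))) a h = a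
  h0_id_right : ∀ a h, h0 a (i2 (i1 (t0 (s1 a)))) h = a
  exchange : ∀ a a' b b' h1 h2 h3 h4 h5 h6,
    h0 (c1 a a' h1) (c1 b b' h2) h3 = c1 (h0 a b h4) (h0 a' b' h5) h6

/-- A 1-cell `u : x → y` is invertible (for composition along objects). -/
def OneInv (T : TwoCat) (u : T.C1) : Prop :=
  ∃ v h1 h2, T.c0 u v h1 = T.i1 (T.s0 u) ∧ T.c0 v u h2 = T.i1 (T.t0 u)

/-- A 2-cell is horizontally invertible. -/
def HInv (T : TwoCat) (a : T.C2) : Prop :=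
  ∃ b h1 h2, T.h0 a b h1 = T.i2 (T.i1 (T.s0 (T.s1 a))) ∧
    T.h0 b a h2 = T.i2 (T.i1 (T.t0 (T.s1 a)))

/-- A 2-cell is vertically invertible. -/
def VInv (T : TwoCat) (a : T.C2) : Prop :=
  ∃ b h1 h2, T.c1 a b h1 = T.i2 (T.s1 a) ∧ T.c1 b a h2 = T.i2 (T.t1 a)

namespace TwoCat

theorem gl (T : TwoCat) {a b : T.C2} (h : T.t0 (T.s1 a) = T.s0 (T.s1 b)) :
    T.t0 (T.t1 a) = T.s0 (T.t1 b) := by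
  rw [← T.glob_t, ← T.glob_s]; exact h

theorem h0s' (T : TwoCat) (a b : T.C2) (h : T.t0 (T.s1 a) = T.s0 (T.s1 b)) :
    T.s1 (T.h0 a b h) = T.c0 (T.s1 a) (T.s1 b) h := T.h0s a b h h

theorem h0t' (T : TwoCat) (a b : T.C2) (h : T.t0 (T.s1 a) = T.s0 (T.s1 b)) :
    T.t1 (T.h0 a b h) = T.c0 (T.t1 a) (T.t1 b) (T.gl h) := T.h0t a b h _

theorem c0_congr (T : TwoCat) {u u' v v' : T.C1} (hu : u = u') (hv : v = v')
    (h : T.t0 u = T.s0 v) :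
    T.c0 u v h = T.c0 u' v'
      ((congrArg T.t0 hu).symm.trans (h.trans (congrArg T.s0 hv))) := by
  cases hu; cases hv; rfl

theorem c1_congr (T : TwoCat) {a a' b b' : T.C2} (ha : a = a') (hb : b = b')
    (h : T.t1 a = T.s1 b) :
    T.c1 a b h = T.c1 a' b'
      ((congrArg T.t1 ha).symm.trans (h.trans (congrArg T.s1 hb))) := by
  cases ha; cases hb; rfl

theorem h0_congr (T : TwoCat) {a a' b b' : T.C2} (ha : a = a') (hb : b = b')
    (h : T.t0 (T.s1 a) = T.s0 (T.s1 b)) :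
    T.h0 a b h = T.h0 a' b'
      ((congrArg (fun z => T.t0 (T.s1 z)) ha).symm.trans
        (h.trans (congrArg (fun z => T.s0 (T.s1 z)) hb))) := by
  cases ha; cases hb; rfl


theorem c1_id_left' (T : TwoCat) (e : T.C2) {w : T.C1} (hw : T.s1 e = w)
    (h : T.t1 (T.i2 w) = T.s1 e) : T.c1 (T.i2 w) e h = e := by
  cases hw; exact T.c1_id_left e h

theorem c1_id_right' (T : TwoCat) (e : T.C2) {w : T.C1} (hw : T.t1 e = w)
    (h : T.t1 e = T.s1 (T.i2 w)) : T.c1 e (T.i2 w) h = e := by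
  cases hw; exact T.c1_id_right e h

theorem h0_id_left' (T : TwoCat) (e : T.C2) {x : T.C0} (hx : T.s0 (T.s1 e) = x)
    (h : T.t0 (T.s1 (T.i2 (T.i1 x))) = T.s0 (T.s1 e)) : T.h0 (T.i2 (T.i1 x)) e h = e := by
  cases hx; exact T.h0_id_left e h

theorem h0_id_right' (T : TwoCat) (e : T.C2) {x : T.C0} (hx : T.t0 (T.s1 e) = x)
    (h : T.t0 (T.s1 e) = T.s0 (T.s1 (T.i2 (T.i1 x)))) : T.h0 e (T.i2 (T.i1 x)) h = e := by
  cases hx; exact T.h0_id_right e h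

theorem c0_id_left' (T : TwoCat) (u : T.C1) {x : T.C0} (hx : T.s0 u = x)
    (h : T.t0 (T.i1 x) = T.s0 u) : T.c0 (T.i1 x) u h = u := by
  cases hx; exact T.c0_id_left u h

theorem c0_id_right' (T : TwoCat) (u : T.C1) {x : T.C0} (hx : T.t0 u = x)
    (h : T.t0 u = T.s0 (T.i1 x)) : T.c0 u (T.i1 x) h = u := by
  cases hx; exact T.c0_id_right u h

end TwoCat
theorem dir1 (T : TwoCat) (a : T.C2) (h : HInv T a) : VInv T a := by
  obtain ⟨b, hb1, hb2, hab, hba⟩ := h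
  have f1 : T.s0 (T.t1 a) = T.s0 (T.s1 a) := (T.glob_s a).symm
  have f2 : T.t0 (T.t1 a) = T.t0 (T.s1 a) := (T.glob_t a).symm
  have f3 : T.s0 (T.s1 b) = T.t0 (T.s1 a) := hb1.symm
  have f4 : T.s0 (T.t1 b) = T.t0 (T.s1 a) := (T.glob_s b).symm.trans hb1.symm
  have f5 : T.t0 (T.s1 b) = T.s0 (T.s1 a) := hb2
  have f6 : T.t0 (T.t1 b) = T.s0 (T.s1 a) := (T.glob_t b).symm.trans hb2
  have hb1' : T.t0 (T.t1 a) = T.s0 (T.t1 b) := T.gl hb1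
  have e2 : T.c0 (T.t1 a) (T.t1 b) hb1' = T.i1 (T.s0 (T.s1 a)) := by
    have h := congrArg T.t1 hab
    rwa [T.h0t a b hb1 hb1', T.i2t] at h
  have e3 : T.c0 (T.s1 b) (T.s1 a) hb2 = T.i1 (T.t0 (T.s1 a)) := by
    have h := congrArg T.s1 hba
    rwa [T.h0s b a hb2 hb2, T.i2s] at h
  have p1 : T.t0 (T.s1 b) = T.s0 (T.s1 (T.i2 (T.s1 a))) := by simp only [T.h0s', T.h0t', T.c0s, T.c0t, T.c1s, T.c1t, T.i1s, T.i1t, T.i2s, T.i2t, f1, f2, f3, f4, f5, f6, e2, e3]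
  have p2 : T.t0 (T.s1 (T.i2 (T.t1 a))) = T.s0 (T.s1 (T.h0 b (T.i2 (T.s1 a)) p1)) := by simp only [T.h0s', T.h0t', T.c0s, T.c0t, T.c1s, T.c1t, T.i1s, T.i1t, T.i2s, T.i2t, f1, f2, f3, f4, f5, f6, e2, e3]
  have hs_inner : T.s1 (T.h0 b (T.i2 (T.s1 a)) p1) = T.i1 (T.t0 (T.s1 a)) := by
    simp only [T.h0s', T.i2s]; exact e3
  have hs1c : T.s1 (T.h0 (T.i2 (T.t1 a)) (T.h0 b (T.i2 (T.s1 a)) p1) p2) = T.t1 a := by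
    simp only [T.h0s', T.i2s, e3, T.glob_t a, T.c0_id_right]
  have ht1c : T.t1 (T.h0 (T.i2 (T.t1 a)) (T.h0 b (T.i2 (T.s1 a)) p1) p2) = T.s1 a := by
    have step1 : T.t1 (T.h0 (T.i2 (T.t1 a)) (T.h0 b (T.i2 (T.s1 a)) p1) p2)
        = T.c0 (T.t1 a) (T.c0 (T.t1 b) (T.s1 a) (by simp only [T.h0s', T.h0t', T.c0s, T.c0t, T.c1s, T.c1t, T.i1s, T.i1t, T.i2s, T.i2t, f1, f2, f3, f4, f5, f6, e2, e3])) (by simp only [T.h0s', T.h0t', T.c0s, T.c0t, T.c1s, T.c1t, T.i1s, T.i1t, T.i2s, T.i2t, f1, f2, f3, f4, f5, f6, e2, e3]) := by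
      simp only [T.h0t', T.i2t]
    have step2 : T.c0 (T.c0 (T.t1 a) (T.t1 b) hb1') (T.s1 a) (by simp only [T.h0s', T.h0t', T.c0s, T.c0t, T.c1s, T.c1t, T.i1s, T.i1t, T.i2s, T.i2t, f1, f2, f3, f4, f5, f6, e2, e3])
        = T.c0 (T.t1 a) (T.c0 (T.t1 b) (T.s1 a) (by simp only [T.h0s', T.h0t', T.c0s, T.c0t, T.c1s, T.c1t, T.i1s, T.i1t, T.i2s, T.i2t, f1, f2, f3, f4, f5, f6, e2, e3])) (by simp only [T.h0s', T.h0t', T.c0s, T.c0t, T.c1s, T.c1t, T.i1s, T.i1t, T.i2s, T.i2t, f1, f2, f3, f4, f5, f6, e2, e3]) :=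
      T.c0_assoc _ _ _ _ _ _ _
    rw [step1]
    simp only [← step2, e2, T.c0_id_left]
  refine ⟨T.h0 (T.i2 (T.t1 a)) (T.h0 b (T.i2 (T.s1 a)) p1) p2, hs1c.symm, ht1c, ?_, ?_⟩
  · -- c1 a c = i2 (s1 a)
    calc T.c1 a (T.h0 (T.i2 (T.t1 a)) (T.h0 b (T.i2 (T.s1 a)) p1) p2) hs1c.symm
        = T.c1 (T.h0 a (T.i2 (T.i1 (T.t0 (T.s1 a)))) (by simp only [T.h0s', T.h0t', T.c0s, T.c0t, T.c1s, T.c1t, T.i1s, T.i1t, T.i2s, T.i2t, f1, f2, f3, f4, f5, f6, e2, e3]))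
            (T.h0 (T.i2 (T.t1 a)) (T.h0 b (T.i2 (T.s1 a)) p1) p2) (by simp only [T.h0s', T.h0t', T.c0s, T.c0t, T.c1s, T.c1t, T.i1s, T.i1t, T.i2s, T.i2t, f1, f2, f3, f4, f5, f6, e2, e3]) := by
          simp only [T.h0_id_right]
      _ = T.h0 (T.c1 a (T.i2 (T.t1 a)) (by simp only [T.h0s', T.h0t', T.c0s, T.c0t, T.c1s, T.c1t, T.i1s, T.i1t, T.i2s, T.i2t, f1, f2, f3, f4, f5, f6, e2, e3]))
            (T.c1 (T.i2 (T.i1 (T.t0 (T.s1 a)))) (T.h0 b (T.i2 (T.s1 a)) p1) (by simp only [T.h0s', T.h0t', T.c0s, T.c0t, T.c1s, T.c1t, T.i1s, T.i1t, T.i2s, T.i2t, f1, f2, f3, f4, f5, f6, e2, e3]))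
            (by simp only [T.h0s', T.h0t', T.c0s, T.c0t, T.c1s, T.c1t, T.i1s, T.i1t, T.i2s, T.i2t, f1, f2, f3, f4, f5, f6, e2, e3]) :=
          (T.exchange a (T.i2 (T.t1 a)) (T.i2 (T.i1 (T.t0 (T.s1 a))))
            (T.h0 b (T.i2 (T.s1 a)) p1) _ _ _ _ _ _).symm
      _ = T.h0 a (T.h0 b (T.i2 (T.s1 a)) p1) (by simp only [T.h0s', T.h0t', T.c0s, T.c0t, T.c1s, T.c1t, T.i1s, T.i1t, T.i2s, T.i2t, f1, f2, f3, f4, f5, f6, e2, e3]) :=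
          T.h0_congr (T.c1_id_right a _)
            (T.c1_id_left' (T.h0 b (T.i2 (T.s1 a)) p1) hs_inner _) _
      _ = T.h0 (T.h0 a b hb1) (T.i2 (T.s1 a)) (by simp only [T.h0s', T.h0t', T.c0s, T.c0t, T.c1s, T.c1t, T.i1s, T.i1t, T.i2s, T.i2t, f1, f2, f3, f4, f5, f6, e2, e3]) :=
          (T.h0_assoc a b (T.i2 (T.s1 a)) hb1 _ p1 _).symm
      _ = T.h0 (T.i2 (T.i1 (T.s0 (T.s1 a)))) (T.i2 (T.s1 a)) (by simp only [T.h0s', T.h0t', T.c0s, T.c0t, T.c1s, T.c1t, T.i1s, T.i1t, T.i2s, T.i2t, f1, f2, f3, f4, f5, f6, e2, e3]) := by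
          simp only [hab]
      _ = T.i2 (T.c0 (T.i1 (T.s0 (T.s1 a))) (T.s1 a) (by simp only [T.h0s', T.h0t', T.c0s, T.c0t, T.c1s, T.c1t, T.i1s, T.i1t, T.i2s, T.i2t, f1, f2, f3, f4, f5, f6, e2, e3])) := T.h0_i2 _ _ _ _
      _ = T.i2 (T.s1 a) := congrArg T.i2 (T.c0_id_left (T.s1 a) _)
  · -- c1 c a = i2 (t1 a)
    have n1 : T.t0 (T.s1 (T.i2 (T.t1 b))) = T.s0 (T.s1 a) := by simp only [T.h0s', T.h0t', T.c0s, T.c0t, T.c1s, T.c1t, T.i1s, T.i1t, T.i2s, T.i2t, f1, f2, f3, f4, f5, f6, e2, e3]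
    have n2 : T.t0 (T.s1 (T.i2 (T.t1 a))) = T.s0 (T.s1 (T.h0 (T.i2 (T.t1 b)) a n1)) := by simp only [T.h0s', T.h0t', T.c0s, T.c0t, T.c1s, T.c1t, T.i1s, T.i1t, T.i2s, T.i2t, f1, f2, f3, f4, f5, f6, e2, e3]
    have dY : T.h0 (T.i2 (T.t1 a)) (T.h0 (T.i2 (T.t1 b)) a n1) n2 = a :=
      calc T.h0 (T.i2 (T.t1 a)) (T.h0 (T.i2 (T.t1 b)) a n1) n2
          = T.h0 (T.h0 (T.i2 (T.t1 a)) (T.i2 (T.t1 b)) (by simp only [T.h0s', T.h0t', T.c0s, T.c0t, T.c1s, T.c1t, T.i1s, T.i1t, T.i2s, T.i2t, f1, f2, f3, f4, f5, f6, e2, e3])) a (by simp only [T.h0s', T.h0t', T.c0s, T.c0t, T.c1s, T.c1t, T.i1s, T.i1t, T.i2s, T.i2t, f1, f2, f3, f4, f5, f6, e2, e3]) :=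
            (T.h0_assoc _ _ _ _ _ _ _).symm
        _ = T.h0 (T.i2 (T.c0 (T.t1 a) (T.t1 b) hb1')) a (by simp only [T.h0s', T.h0t', T.c0s, T.c0t, T.c1s, T.c1t, T.i1s, T.i1t, T.i2s, T.i2t, f1, f2, f3, f4, f5, f6, e2, e3]) :=
            T.h0_congr (T.h0_i2 _ _ _ _) rfl _
        _ = T.h0 (T.i2 (T.i1 (T.s0 (T.s1 a)))) a (by simp only [T.h0s', T.h0t', T.c0s, T.c0t, T.c1s, T.c1t, T.i1s, T.i1t, T.i2s, T.i2t, f1, f2, f3, f4, f5, f6, e2, e3]) := by simp only [e2]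
        _ = a := T.h0_id_left a _
    have ddB : T.c1 (T.h0 b (T.i2 (T.s1 a)) p1) (T.h0 (T.i2 (T.t1 b)) a n1) (by simp only [T.h0s', T.h0t', T.c0s, T.c0t, T.c1s, T.c1t, T.i1s, T.i1t, T.i2s, T.i2t, f1, f2, f3, f4, f5, f6, e2, e3])
        = T.h0 b a hb2 :=
      ((T.exchange b (T.i2 (T.t1 b)) (T.i2 (T.s1 a)) a (by simp only [T.h0s', T.h0t', T.c0s, T.c0t, T.c1s, T.c1t, T.i1s, T.i1t, T.i2s, T.i2t, f1, f2, f3, f4, f5, f6, e2, e3]) (by simp only [T.h0s', T.h0t', T.c0s, T.c0t, T.c1s, T.c1t, T.i1s, T.i1t, T.i2s, T.i2t, f1, f2, f3, f4, f5, f6, e2, e3]) (by simp only [T.h0s', T.h0t', T.c0s, T.c0t, T.c1s, T.c1t, T.i1s, T.i1t, T.i2s, T.i2t, f1, f2, f3, f4, f5, f6, e2, e3])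
          p1 n1 (by simp only [T.h0s', T.h0t', T.c0s, T.c0t, T.c1s, T.c1t, T.i1s, T.i1t, T.i2s, T.i2t, f1, f2, f3, f4, f5, f6, e2, e3])).symm).trans
        (T.h0_congr (T.c1_id_right b _) (T.c1_id_left a _) _)
    calc T.c1 (T.h0 (T.i2 (T.t1 a)) (T.h0 b (T.i2 (T.s1 a)) p1) p2) a ht1c
        = T.c1 (T.h0 (T.i2 (T.t1 a)) (T.h0 b (T.i2 (T.s1 a)) p1) p2)
            (T.h0 (T.i2 (T.t1 a)) (T.h0 (T.i2 (T.t1 b)) a n1) n2) (by simp only [T.h0s', T.h0t', T.c0s, T.c0t, T.c1s, T.c1t, T.i1s, T.i1t, T.i2s, T.i2t, f1, f2, f3, f4, f5, f6, e2, e3]) :=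
          T.c1_congr rfl dY.symm ht1c
      _ = T.h0 (T.c1 (T.i2 (T.t1 a)) (T.i2 (T.t1 a)) (by simp only [T.h0s', T.h0t', T.c0s, T.c0t, T.c1s, T.c1t, T.i1s, T.i1t, T.i2s, T.i2t, f1, f2, f3, f4, f5, f6, e2, e3]))
            (T.c1 (T.h0 b (T.i2 (T.s1 a)) p1) (T.h0 (T.i2 (T.t1 b)) a n1) (by simp only [T.h0s', T.h0t', T.c0s, T.c0t, T.c1s, T.c1t, T.i1s, T.i1t, T.i2s, T.i2t, f1, f2, f3, f4, f5, f6, e2, e3]))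
            (by simp only [T.h0s', T.h0t', T.c0s, T.c0t, T.c1s, T.c1t, T.i1s, T.i1t, T.i2s, T.i2t, f1, f2, f3, f4, f5, f6, e2, e3]) :=
          (T.exchange (T.i2 (T.t1 a)) (T.i2 (T.t1 a)) (T.h0 b (T.i2 (T.s1 a)) p1)
            (T.h0 (T.i2 (T.t1 b)) a n1) _ _ _ _ _ _).symm
      _ = T.h0 (T.i2 (T.t1 a)) (T.h0 b a hb2) (by simp only [T.h0s', T.h0t', T.c0s, T.c0t, T.c1s, T.c1t, T.i1s, T.i1t, T.i2s, T.i2t, f1, f2, f3, f4, f5, f6, e2, e3]) :=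
          T.h0_congr (T.c1_id_left' (T.i2 (T.t1 a)) (T.i2s (T.t1 a)) _) ddB _
      _ = T.h0 (T.i2 (T.t1 a)) (T.i2 (T.i1 (T.t0 (T.s1 a)))) (by simp only [T.h0s', T.h0t', T.c0s, T.c0t, T.c1s, T.c1t, T.i1s, T.i1t, T.i2s, T.i2t, f1, f2, f3, f4, f5, f6, e2, e3]) := by
          simp only [hba]
      _ = T.i2 (T.c0 (T.t1 a) (T.i1 (T.t0 (T.s1 a))) (by simp only [T.h0s', T.h0t', T.c0s, T.c0t, T.c1s, T.c1t, T.i1s, T.i1t, T.i2s, T.i2t, f1, f2, f3, f4, f5, f6, e2, e3])) := T.h0_i2 _ _ _ _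
      _ = T.i2 (T.t1 a) := congrArg T.i2 (T.c0_id_right' (T.t1 a) f2 _)

theorem dir2 (T : TwoCat) (hone : ∀ u : T.C1, OneInv T u) (a : T.C2) (h : VInv T a) :
    HInv T a := by
  obtain ⟨b, k1, k2, hab, hba⟩ := h
  obtain ⟨u', hu1, hu2, eu1, eu2⟩ := hone (T.s1 a)
  obtain ⟨v', hv1, hv2, ev1, ev2⟩ := hone (T.t1 a)
  have g1 : T.s0 (T.t1 a) = T.s0 (T.s1 a) := (T.glob_s a).symm
  have g2 : T.t0 (T.t1 a) = T.t0 (T.s1 a) := (T.glob_t a).symm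
  have g3 : T.s1 b = T.t1 a := k1.symm
  have g4 : T.t1 b = T.s1 a := k2
  have g5 : T.s0 u' = T.t0 (T.s1 a) := hu1.symm
  have g6 : T.t0 u' = T.s0 (T.s1 a) := hu2
  have g7 : T.s0 v' = T.t0 (T.s1 a) := hv1.symm.trans g2
  have g8 : T.t0 v' = T.s0 (T.s1 a) := hv2.trans g1
  have pA : T.t0 (T.s1 b) = T.s0 (T.s1 (T.i2 u')) := by simp only [T.h0s', T.h0t', T.c0s, T.c0t, T.c1s, T.c1t, T.i1s, T.i1t, T.i2s, T.i2t, g1, g2, g3, g4, g5, g6, g7, g8, eu1, eu2, ev1, ev2]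
  have pB : T.t0 (T.s1 (T.i2 v')) = T.s0 (T.s1 (T.h0 b (T.i2 u') pA)) := by simp only [T.h0s', T.h0t', T.c0s, T.c0t, T.c1s, T.c1t, T.i1s, T.i1t, T.i2s, T.i2t, g1, g2, g3, g4, g5, g6, g7, g8, eu1, eu2, ev1, ev2]
  have hs1c2 : T.s1 (T.h0 (T.i2 v') (T.h0 b (T.i2 u') pA) pB) = u' := by
    have st1 : T.s1 (T.h0 (T.i2 v') (T.h0 b (T.i2 u') pA) pB)
        = T.c0 v' (T.c0 (T.t1 a) u' (by simp only [T.h0s', T.h0t', T.c0s, T.c0t, T.c1s, T.c1t, T.i1s, T.i1t, T.i2s, T.i2t, g1, g2, g3, g4, g5, g6, g7, g8, eu1, eu2, ev1, ev2])) (by simp only [T.h0s', T.h0t', T.c0s, T.c0t, T.c1s, T.c1t, T.i1s, T.i1t, T.i2s, T.i2t, g1, g2, g3, g4, g5, g6, g7, g8, eu1, eu2, ev1, ev2]) := by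
      simp only [T.h0s', T.i2s, g3]
    have st2 : T.c0 (T.c0 v' (T.t1 a) hv2) u' (by simp only [T.h0s', T.h0t', T.c0s, T.c0t, T.c1s, T.c1t, T.i1s, T.i1t, T.i2s, T.i2t, g1, g2, g3, g4, g5, g6, g7, g8, eu1, eu2, ev1, ev2])
        = T.c0 v' (T.c0 (T.t1 a) u' (by simp only [T.h0s', T.h0t', T.c0s, T.c0t, T.c1s, T.c1t, T.i1s, T.i1t, T.i2s, T.i2t, g1, g2, g3, g4, g5, g6, g7, g8, eu1, eu2, ev1, ev2])) (by simp only [T.h0s', T.h0t', T.c0s, T.c0t, T.c1s, T.c1t, T.i1s, T.i1t, T.i2s, T.i2t, g1, g2, g3, g4, g5, g6, g7, g8, eu1, eu2, ev1, ev2]) := T.c0_assoc _ _ _ _ _ _ _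
    rw [st1]
    simp only [← st2, ev2]
    exact T.c0_id_left' u' (g5.trans g2.symm) _
  have ht1c2 : T.t1 (T.h0 (T.i2 v') (T.h0 b (T.i2 u') pA) pB) = v' := by
    have st3 : T.t1 (T.h0 (T.i2 v') (T.h0 b (T.i2 u') pA) pB)
        = T.c0 v' (T.c0 (T.s1 a) u' (by simp only [T.h0s', T.h0t', T.c0s, T.c0t, T.c1s, T.c1t, T.i1s, T.i1t, T.i2s, T.i2t, g1, g2, g3, g4, g5, g6, g7, g8, eu1, eu2, ev1, ev2])) (by simp only [T.h0s', T.h0t', T.c0s, T.c0t, T.c1s, T.c1t, T.i1s, T.i1t, T.i2s, T.i2t, g1, g2, g3, g4, g5, g6, g7, g8, eu1, eu2, ev1, ev2]) := by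
      simp only [T.h0t', T.i2t, g4]
    rw [st3]
    simp only [eu1]
    exact T.c0_id_right' v' g8 _
  have r1 : T.t0 (T.s1 a) = T.s0 (T.s1 (T.h0 (T.i2 v') (T.h0 b (T.i2 u') pA) pB)) := by simp only [T.h0s', T.h0t', T.c0s, T.c0t, T.c1s, T.c1t, T.i1s, T.i1t, T.i2s, T.i2t, g1, g2, g3, g4, g5, g6, g7, g8, eu1, eu2, ev1, ev2]
  have r2 : T.t0 (T.s1 (T.h0 (T.i2 v') (T.h0 b (T.i2 u') pA) pB)) = T.s0 (T.s1 a) := by simp only [T.h0s', T.h0t', T.c0s, T.c0t, T.c1s, T.c1t, T.i1s, T.i1t, T.i2s, T.i2t, g1, g2, g3, g4, g5, g6, g7, g8, eu1, eu2, ev1, ev2]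
  have pE : T.t1 (T.i2 u') = T.s1 (T.h0 (T.i2 v') (T.h0 b (T.i2 u') pA) pB) := by
    simp only [T.i2t, hs1c2]
  have pF : T.t1 (T.h0 a (T.i2 u') (by simp only [T.h0s', T.h0t', T.c0s, T.c0t, T.c1s, T.c1t, T.i1s, T.i1t, T.i2s, T.i2t, g1, g2, g3, g4, g5, g6, g7, g8, eu1, eu2, ev1, ev2]))
      = T.s1 (T.h0 (T.i2 (T.t1 a)) (T.h0 (T.i2 v') (T.h0 b (T.i2 u') pA) pB) (by simp only [T.h0s', T.h0t', T.c0s, T.c0t, T.c1s, T.c1t, T.i1s, T.i1t, T.i2s, T.i2t, g1, g2, g3, g4, g5, g6, g7, g8, eu1, eu2, ev1, ev2])) := by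
    rw [T.h0t' a (T.i2 u'), T.h0s' (T.i2 (T.t1 a))]
    simp only [T.i2s, T.i2t, hs1c2]
  have ee : T.h0 (T.i2 (T.t1 a)) (T.h0 (T.i2 v') (T.h0 b (T.i2 u') pA) pB) (by simp only [T.h0s', T.h0t', T.c0s, T.c0t, T.c1s, T.c1t, T.i1s, T.i1t, T.i2s, T.i2t, g1, g2, g3, g4, g5, g6, g7, g8, eu1, eu2, ev1, ev2])
      = T.h0 b (T.i2 u') pA :=
    calc T.h0 (T.i2 (T.t1 a)) (T.h0 (T.i2 v') (T.h0 b (T.i2 u') pA) pB) (by simp only [T.h0s', T.h0t', T.c0s, T.c0t, T.c1s, T.c1t, T.i1s, T.i1t, T.i2s, T.i2t, g1, g2, g3, g4, g5, g6, g7, g8, eu1, eu2, ev1, ev2])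
        = T.h0 (T.h0 (T.i2 (T.t1 a)) (T.i2 v') (by simp only [T.h0s', T.h0t', T.c0s, T.c0t, T.c1s, T.c1t, T.i1s, T.i1t, T.i2s, T.i2t, g1, g2, g3, g4, g5, g6, g7, g8, eu1, eu2, ev1, ev2])) (T.h0 b (T.i2 u') pA) (by simp only [T.h0s', T.h0t', T.c0s, T.c0t, T.c1s, T.c1t, T.i1s, T.i1t, T.i2s, T.i2t, g1, g2, g3, g4, g5, g6, g7, g8, eu1, eu2, ev1, ev2]) :=
          (T.h0_assoc _ _ _ _ _ _ _).symm
      _ = T.h0 (T.i2 (T.c0 (T.t1 a) v' hv1)) (T.h0 b (T.i2 u') pA) (by simp only [T.h0s', T.h0t', T.c0s, T.c0t, T.c1s, T.c1t, T.i1s, T.i1t, T.i2s, T.i2t, g1, g2, g3, g4, g5, g6, g7, g8, eu1, eu2, ev1, ev2]) :=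
          T.h0_congr (T.h0_i2 _ _ _ hv1) rfl _
      _ = T.h0 (T.i2 (T.i1 (T.s0 (T.s1 a)))) (T.h0 b (T.i2 u') pA) (by simp only [T.h0s', T.h0t', T.c0s, T.c0t, T.c1s, T.c1t, T.i1s, T.i1t, T.i2s, T.i2t, g1, g2, g3, g4, g5, g6, g7, g8, eu1, eu2, ev1, ev2]) := by
          simp only [ev1, g1]
      _ = T.h0 b (T.i2 u') pA := T.h0_id_left' (T.h0 b (T.i2 u') pA) (by simp only [T.h0s', T.h0t', T.c0s, T.c0t, T.c1s, T.c1t, T.i1s, T.i1t, T.i2s, T.i2t, g1, g2, g3, g4, g5, g6, g7, g8, eu1, eu2, ev1, ev2]) _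
  have pG : T.t1 (T.h0 a (T.i2 u') (by simp only [T.h0s', T.h0t', T.c0s, T.c0t, T.c1s, T.c1t, T.i1s, T.i1t, T.i2s, T.i2t, g1, g2, g3, g4, g5, g6, g7, g8, eu1, eu2, ev1, ev2])) = T.s1 (T.h0 b (T.i2 u') pA) := by
    rw [T.h0t' a (T.i2 u'), T.h0s' b (T.i2 u')]
    simp only [T.i2s, T.i2t, g3]
  refine ⟨T.h0 (T.i2 v') (T.h0 b (T.i2 u') pA) pB, r1, r2, ?_, ?_⟩
  · calc T.h0 a (T.h0 (T.i2 v') (T.h0 b (T.i2 u') pA) pB) r1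
        = T.h0 (T.c1 a (T.i2 (T.t1 a)) (by simp only [T.i2s]))
            (T.c1 (T.i2 u') (T.h0 (T.i2 v') (T.h0 b (T.i2 u') pA) pB) pE) (by simp only [T.h0s', T.h0t', T.c0s, T.c0t, T.c1s, T.c1t, T.i1s, T.i1t, T.i2s, T.i2t, g1, g2, g3, g4, g5, g6, g7, g8, eu1, eu2, ev1, ev2]) :=
          (T.h0_congr (T.c1_id_right a _)
            (T.c1_id_left' (T.h0 (T.i2 v') (T.h0 b (T.i2 u') pA) pB) hs1c2 _) _).symm
      _ = T.c1 (T.h0 a (T.i2 u') (by simp only [T.h0s', T.h0t', T.c0s, T.c0t, T.c1s, T.c1t, T.i1s, T.i1t, T.i2s, T.i2t, g1, g2, g3, g4, g5, g6, g7, g8, eu1, eu2, ev1, ev2]))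
            (T.h0 (T.i2 (T.t1 a)) (T.h0 (T.i2 v') (T.h0 b (T.i2 u') pA) pB) (by simp only [T.h0s', T.h0t', T.c0s, T.c0t, T.c1s, T.c1t, T.i1s, T.i1t, T.i2s, T.i2t, g1, g2, g3, g4, g5, g6, g7, g8, eu1, eu2, ev1, ev2])) pF :=
          T.exchange a (T.i2 (T.t1 a)) (T.i2 u')
            (T.h0 (T.i2 v') (T.h0 b (T.i2 u') pA) pB) _ _ _ _ _ _
      _ = T.c1 (T.h0 a (T.i2 u') (by simp only [T.h0s', T.h0t', T.c0s, T.c0t, T.c1s, T.c1t, T.i1s, T.i1t, T.i2s, T.i2t, g1, g2, g3, g4, g5, g6, g7, g8, eu1, eu2, ev1, ev2])) (T.h0 b (T.i2 u') pA) pG :=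
          T.c1_congr rfl ee _
      _ = T.h0 (T.c1 a b k1) (T.c1 (T.i2 u') (T.i2 u') (by simp only [T.i2s, T.i2t])) (by simp only [T.h0s', T.h0t', T.c0s, T.c0t, T.c1s, T.c1t, T.i1s, T.i1t, T.i2s, T.i2t, g1, g2, g3, g4, g5, g6, g7, g8, eu1, eu2, ev1, ev2]) :=
          (T.exchange a b (T.i2 u') (T.i2 u') k1 (by simp only [T.i2s, T.i2t]) (by simp only [T.h0s', T.h0t', T.c0s, T.c0t, T.c1s, T.c1t, T.i1s, T.i1t, T.i2s, T.i2t, g1, g2, g3, g4, g5, g6, g7, g8, eu1, eu2, ev1, ev2]) _ _ _).symm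
      _ = T.h0 (T.i2 (T.s1 a)) (T.i2 u') (by simp only [T.h0s', T.h0t', T.c0s, T.c0t, T.c1s, T.c1t, T.i1s, T.i1t, T.i2s, T.i2t, g1, g2, g3, g4, g5, g6, g7, g8, eu1, eu2, ev1, ev2]) :=
          T.h0_congr hab (T.c1_id_left' (T.i2 u') (T.i2s u') _) _
      _ = T.i2 (T.c0 (T.s1 a) u' hu1) := T.h0_i2 _ _ _ hu1
      _ = T.i2 (T.i1 (T.s0 (T.s1 a))) := congrArg T.i2 eu1
  · have pH : T.t1 (T.h0 (T.i2 v') (T.h0 b (T.i2 u') pA) pB) = T.s1 (T.i2 v') := by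
      simp only [T.i2s, ht1c2]
    have pI : T.t1 (T.h0 (T.h0 (T.i2 v') (T.h0 b (T.i2 u') pA) pB) (T.i2 (T.s1 a)) (by simp only [T.h0s', T.h0t', T.c0s, T.c0t, T.c1s, T.c1t, T.i1s, T.i1t, T.i2s, T.i2t, g1, g2, g3, g4, g5, g6, g7, g8, eu1, eu2, ev1, ev2]))
        = T.s1 (T.h0 (T.i2 v') a (by simp only [T.h0s', T.h0t', T.c0s, T.c0t, T.c1s, T.c1t, T.i1s, T.i1t, T.i2s, T.i2t, g1, g2, g3, g4, g5, g6, g7, g8, eu1, eu2, ev1, ev2])) := by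
      rw [T.h0t' (T.h0 (T.i2 v') (T.h0 b (T.i2 u') pA) pB) (T.i2 (T.s1 a)),
        T.h0s' (T.i2 v') a]
      simp only [T.i2s, T.i2t, ht1c2]
    have ff : T.h0 (T.h0 (T.i2 v') (T.h0 b (T.i2 u') pA) pB) (T.i2 (T.s1 a)) (by simp only [T.h0s', T.h0t', T.c0s, T.c0t, T.c1s, T.c1t, T.i1s, T.i1t, T.i2s, T.i2t, g1, g2, g3, g4, g5, g6, g7, g8, eu1, eu2, ev1, ev2])
        = T.h0 (T.i2 v') b (by simp only [T.h0s', T.h0t', T.c0s, T.c0t, T.c1s, T.c1t, T.i1s, T.i1t, T.i2s, T.i2t, g1, g2, g3, g4, g5, g6, g7, g8, eu1, eu2, ev1, ev2]) :=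
      calc T.h0 (T.h0 (T.i2 v') (T.h0 b (T.i2 u') pA) pB) (T.i2 (T.s1 a)) (by simp only [T.h0s', T.h0t', T.c0s, T.c0t, T.c1s, T.c1t, T.i1s, T.i1t, T.i2s, T.i2t, g1, g2, g3, g4, g5, g6, g7, g8, eu1, eu2, ev1, ev2])
          = T.h0 (T.i2 v') (T.h0 (T.h0 b (T.i2 u') pA) (T.i2 (T.s1 a)) (by simp only [T.h0s', T.h0t', T.c0s, T.c0t, T.c1s, T.c1t, T.i1s, T.i1t, T.i2s, T.i2t, g1, g2, g3, g4, g5, g6, g7, g8, eu1, eu2, ev1, ev2])) (by simp only [T.h0s', T.h0t', T.c0s, T.c0t, T.c1s, T.c1t, T.i1s, T.i1t, T.i2s, T.i2t, g1, g2, g3, g4, g5, g6, g7, g8, eu1, eu2, ev1, ev2]) :=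
            T.h0_assoc _ _ _ _ _ _ _
        _ = T.h0 (T.i2 v') (T.h0 b (T.h0 (T.i2 u') (T.i2 (T.s1 a)) (by simp only [T.h0s', T.h0t', T.c0s, T.c0t, T.c1s, T.c1t, T.i1s, T.i1t, T.i2s, T.i2t, g1, g2, g3, g4, g5, g6, g7, g8, eu1, eu2, ev1, ev2])) (by simp only [T.h0s', T.h0t', T.c0s, T.c0t, T.c1s, T.c1t, T.i1s, T.i1t, T.i2s, T.i2t, g1, g2, g3, g4, g5, g6, g7, g8, eu1, eu2, ev1, ev2])) (by simp only [T.h0s', T.h0t', T.c0s, T.c0t, T.c1s, T.c1t, T.i1s, T.i1t, T.i2s, T.i2t, g1, g2, g3, g4, g5, g6, g7, g8, eu1, eu2, ev1, ev2]) :=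
            T.h0_congr rfl (T.h0_assoc _ _ _ _ _ _ _) _
        _ = T.h0 (T.i2 v') (T.h0 b (T.i2 (T.c0 u' (T.s1 a) hu2)) (by simp only [T.h0s', T.h0t', T.c0s, T.c0t, T.c1s, T.c1t, T.i1s, T.i1t, T.i2s, T.i2t, g1, g2, g3, g4, g5, g6, g7, g8, eu1, eu2, ev1, ev2])) (by simp only [T.h0s', T.h0t', T.c0s, T.c0t, T.c1s, T.c1t, T.i1s, T.i1t, T.i2s, T.i2t, g1, g2, g3, g4, g5, g6, g7, g8, eu1, eu2, ev1, ev2]) :=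
            T.h0_congr rfl (T.h0_congr rfl (T.h0_i2 _ _ _ hu2) _) _
        _ = T.h0 (T.i2 v') (T.h0 b (T.i2 (T.i1 (T.t0 (T.s1 a)))) (by simp only [T.h0s', T.h0t', T.c0s, T.c0t, T.c1s, T.c1t, T.i1s, T.i1t, T.i2s, T.i2t, g1, g2, g3, g4, g5, g6, g7, g8, eu1, eu2, ev1, ev2])) (by simp only [T.h0s', T.h0t', T.c0s, T.c0t, T.c1s, T.c1t, T.i1s, T.i1t, T.i2s, T.i2t, g1, g2, g3, g4, g5, g6, g7, g8, eu1, eu2, ev1, ev2]) := by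
            simp only [eu2]
        _ = T.h0 (T.i2 v') b (by simp only [T.h0s', T.h0t', T.c0s, T.c0t, T.c1s, T.c1t, T.i1s, T.i1t, T.i2s, T.i2t, g1, g2, g3, g4, g5, g6, g7, g8, eu1, eu2, ev1, ev2]) :=
            T.h0_congr rfl (T.h0_id_right' b (by simp only [T.h0s', T.h0t', T.c0s, T.c0t, T.c1s, T.c1t, T.i1s, T.i1t, T.i2s, T.i2t, g1, g2, g3, g4, g5, g6, g7, g8, eu1, eu2, ev1, ev2]) _) _
    calc T.h0 (T.h0 (T.i2 v') (T.h0 b (T.i2 u') pA) pB) a r2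
        = T.h0 (T.c1 (T.h0 (T.i2 v') (T.h0 b (T.i2 u') pA) pB) (T.i2 v') pH)
            (T.c1 (T.i2 (T.s1 a)) a (by simp only [T.i2t])) (by simp only [T.h0s', T.h0t', T.c0s, T.c0t, T.c1s, T.c1t, T.i1s, T.i1t, T.i2s, T.i2t, g1, g2, g3, g4, g5, g6, g7, g8, eu1, eu2, ev1, ev2]) :=
          (T.h0_congr (T.c1_id_right' (T.h0 (T.i2 v') (T.h0 b (T.i2 u') pA) pB) ht1c2 _)
            (T.c1_id_left a _) _).symm
      _ = T.c1 (T.h0 (T.h0 (T.i2 v') (T.h0 b (T.i2 u') pA) pB) (T.i2 (T.s1 a)) (by simp only [T.h0s', T.h0t', T.c0s, T.c0t, T.c1s, T.c1t, T.i1s, T.i1t, T.i2s, T.i2t, g1, g2, g3, g4, g5, g6, g7, g8, eu1, eu2, ev1, ev2]))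
            (T.h0 (T.i2 v') a (by simp only [T.h0s', T.h0t', T.c0s, T.c0t, T.c1s, T.c1t, T.i1s, T.i1t, T.i2s, T.i2t, g1, g2, g3, g4, g5, g6, g7, g8, eu1, eu2, ev1, ev2])) pI :=
          T.exchange (T.h0 (T.i2 v') (T.h0 b (T.i2 u') pA) pB) (T.i2 v')
            (T.i2 (T.s1 a)) a _ _ _ _ _ _
      _ = T.c1 (T.h0 (T.i2 v') b (by simp only [T.h0s', T.h0t', T.c0s, T.c0t, T.c1s, T.c1t, T.i1s, T.i1t, T.i2s, T.i2t, g1, g2, g3, g4, g5, g6, g7, g8, eu1, eu2, ev1, ev2])) (T.h0 (T.i2 v') a (by simp only [T.h0s', T.h0t', T.c0s, T.c0t, T.c1s, T.c1t, T.i1s, T.i1t, T.i2s, T.i2t, g1, g2, g3, g4, g5, g6, g7, g8, eu1, eu2, ev1, ev2])) (by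
            rw [T.h0t' (T.i2 v') b, T.h0s' (T.i2 v') a]
            simp only [T.i2s, T.i2t, g4]) :=
          T.c1_congr ff rfl _
      _ = T.h0 (T.c1 (T.i2 v') (T.i2 v') (by simp only [T.i2s, T.i2t])) (T.c1 b a k2) (by simp only [T.h0s', T.h0t', T.c0s, T.c0t, T.c1s, T.c1t, T.i1s, T.i1t, T.i2s, T.i2t, g1, g2, g3, g4, g5, g6, g7, g8, eu1, eu2, ev1, ev2]) :=
          (T.exchange (T.i2 v') (T.i2 v') b a (by simp only [T.i2s, T.i2t]) k2 (by simp only [T.h0s', T.h0t', T.c0s, T.c0t, T.c1s, T.c1t, T.i1s, T.i1t, T.i2s, T.i2t, g1, g2, g3, g4, g5, g6, g7, g8, eu1, eu2, ev1, ev2]) _ _ _).symm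
      _ = T.h0 (T.i2 v') (T.i2 (T.t1 a)) (by simp only [T.h0s', T.h0t', T.c0s, T.c0t, T.c1s, T.c1t, T.i1s, T.i1t, T.i2s, T.i2t, g1, g2, g3, g4, g5, g6, g7, g8, eu1, eu2, ev1, ev2]) :=
          T.h0_congr (T.c1_id_left' (T.i2 v') (T.i2s v') _) hba _
      _ = T.i2 (T.c0 v' (T.t1 a) hv2) := T.h0_i2 _ _ _ hv2
      _ = T.i2 (T.i1 (T.t0 (T.s1 a))) := congrArg T.i2 (ev2.trans (congrArg T.i1 g2))

/-- In a strict 2-category whose 1-cells are all invertible, a 2-cell is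
horizontally invertible iff it is vertically invertible. -/
theorem horizontal_inv_iff_vertical_inv (T : TwoCat)
    (hone : ∀ u : T.C1, OneInv T u) (a : T.C2) :
    HInv T a ↔ VInv T a := by
  exact ⟨fun h => dir1 T a h, fun h => dir2 T hone a h⟩
end

section
/- Let C be a category with pushouts and let Cyl : C → C be a functor equipped with natural transformations Top, Bot : Cyl → Id and Triv : Id → Cyl satisfying Top ∘ Triv = id and Bot ∘ Triv = id. Call a morphism f : C → D an immersion if there exist g : D → C and h : D → Cyl(D) with g ∘ f = id_C, Top_D ∘ h = f ∘ g, Bot_D ∘ h = id_D, and h ∘ f = Triv_D ∘ f. Then the class of immersions is closed under pushout: if f : C → D is an immersion and the square with f, u : C → C', f' : C' → D', v : D → D' is a pushout, then f' is an immersion. -/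
open CategoryTheory

/-- `f : X ⟶ Y` is an immersion with respect to the abstract cylinder
`(Cyl, Top, Bot, Triv)` if it admits a retraction `g` and a deformation
`h : Y ⟶ Cyl Y` with `Top ∘ h = f ∘ g`, `Bot ∘ h = id` and
`h ∘ f = Triv ∘ f`. -/
def IsImmersion {C : Type*} [Category C] (Cyl : C ⥤ C)
    (Top Bot : Cyl ⟶ 𝟭 C) (Triv : 𝟭 C ⟶ Cyl)
    {X Y : C} (f : X ⟶ Y) : Prop :=
  ∃ (g : Y ⟶ X) (h : Y ⟶ Cyl.obj Y),
    f ≫ g = 𝟙 X ∧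
    h ≫ Top.app Y = g ≫ f ∧
    h ≫ Bot.app Y = 𝟙 Y ∧
    f ≫ h = f ≫ Triv.app Y

/-- Immersions are closed under pushout: if `f : C ⟶ D` is an immersion and
the square with `f`, `u : C ⟶ C'`, `v : D ⟶ D'`, `f' : C' ⟶ D'` is a
pushout, then `f'` is an immersion. -/
theorem isImmersion_pushout {C : Type*} [Category C] [Limits.HasPushouts C]
    (Cyl : C ⥤ C) (Top Bot : Cyl ⟶ 𝟭 C) (Triv : 𝟭 C ⟶ Cyl)
    (hTop : Triv ≫ Top = 𝟙 (𝟭 C)) (hBot : Triv ≫ Bot = 𝟙 (𝟭 C))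
    {A B A' B' : C} (f : A ⟶ B) (u : A ⟶ A') (v : B ⟶ B') (f' : A' ⟶ B')
    (sq : IsPushout f u v f')
    (hf : IsImmersion Cyl Top Bot Triv f) :
    IsImmersion Cyl Top Bot Triv f' := by
  obtain ⟨g, h, hg, h1, h2, h3⟩ := hf
  have hTopB' := congrArg (fun t => NatTrans.app t B') hTop
  have hBotB' := congrArg (fun t => NatTrans.app t B') hBot
  simp only [NatTrans.comp_app, NatTrans.id_app] at hTopB' hBotB'
  -- retraction
  have wg : f ≫ g ≫ u = u ≫ 𝟙 A' := by rw [reassoc_of% hg]; simp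
  refine ⟨sq.desc (g ≫ u) (𝟙 A') wg, ?_⟩
  -- deformation
  have wh : f ≫ h ≫ Cyl.map v = u ≫ f' ≫ Triv.app B' := by
    rw [reassoc_of% h3]
    have := Triv.naturality v
    simp only [Functor.id_map] at this
    rw [← this, ← Category.assoc, sq.w, Category.assoc]
  refine ⟨sq.desc (h ≫ Cyl.map v) (f' ≫ Triv.app B') wh, ?_, ?_, ?_, ?_⟩
  · simp [sq.inr_desc]
  · apply sq.hom_ext
    · rw [sq.inl_desc_assoc, Category.assoc, Top.naturality, Functor.id_map,
        reassoc_of% h1, sq.w, sq.inl_desc_assoc, Category.assoc]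
    · simp [sq.inr_desc_assoc, hTopB']
  · apply sq.hom_ext
    · simp [sq.inl_desc_assoc, Bot.naturality, reassoc_of% h2]
    · simp [sq.inr_desc_assoc, hBotB']
  · rw [sq.inr_desc]
end
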